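/- Let α be a typical number with exponent τ > 0, and let σ(t) = ⌊t⌋ − t + ½. Then there exists C_α > 0 such that for every integer N ≥ 2 and every β ∈ ℝ, |∑_{k=1}^{N} σ(αk + β)| ≤ C_α·(log N)^{1+τ}. -/

import Mathlib

open Real Set Filter

/-- `α` is typical with exponent `τ` and constant `δ`. -/
def IsTypicalWith (α τ δ : ℝ) : Prop :=
  ∀ k₁ k₂ : ℤ, k₂ ≠ 0 →
    δ / (|(k₂ : ℝ)| * (Real.log (1 + |(k₂ : ℝ)|)) ^ τ) ≤ |(k₁ : ℝ) + α * (k₂ : ℝ)|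

/-- `α` is typical: typical with some exponent `τ > 0` and constant `δ > 0`. -/
def IsTypical (α : ℝ) : Prop := ∃ τ > (0:ℝ), ∃ δ > (0:ℝ), IsTypicalWith α τ δ


/-- The sawtooth function `σ(t) = ⌊t⌋ - t + ½`. -/
noncomputable def sawtooth (t : ℝ) : ℝ := (⌊t⌋ : ℝ) - t + 1/2

lemma sawtooth_eq_half_sub_fract (t : ℝ) : sawtooth t = 1/2 - Int.fract t := by
  simp only [sawtooth, Int.fract]; ring

lemma abs_sawtooth_le (t : ℝ) : |sawtooth t| ≤ 1/2 := by
  rw [sawtooth_eq_half_sub_fract]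
  have h1 := Int.fract_nonneg t
  have h2 := Int.fract_lt_one t
  rw [abs_le]; constructor <;> linarith

lemma sawtooth_add_int (t : ℝ) (m : ℤ) : sawtooth (t + m) = sawtooth t := by
  rw [sawtooth_eq_half_sub_fract, sawtooth_eq_half_sub_fract, Int.fract_add_intCast]

lemma hermite_inner (q : ℕ) (hq : 1 ≤ q) (y : ℝ) (hy0 : 0 ≤ y) (hy1 : y < 1) :
    ∑ j ∈ Finset.range q, ⌊y + (j : ℝ)/q⌋ = ⌊(q:ℝ) * y⌋ := by
  have hqR : (0:ℝ) < q := by positivity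
  have hm0 : 0 ≤ ⌊(q:ℝ) * y⌋ := Int.floor_nonneg.2 (by positivity)
  set m : ℕ := (⌊(q:ℝ) * y⌋).toNat with hm
  have hmq : m < q := by
    have h1 : (q:ℝ) * y < q := by nlinarith
    have h2 : ⌊(q:ℝ) * y⌋ < (q:ℤ) := Int.floor_lt.2 (by exact_mod_cast h1)
    omega
  have key : ∀ j ∈ Finset.range q, ⌊y + (j : ℝ)/q⌋ = if q - m ≤ j then 1 else 0 := by
    intro j hj
    rw [Finset.mem_range] at hj
    have hd : (j:ℝ)/q * q = j := div_mul_cancel₀ _ (ne_of_gt hqR)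
    have hnn : (0:ℝ) ≤ y + (j:ℝ)/q := by positivity
    have hlt : y + (j:ℝ)/q < 2 := by
      have : (j:ℝ)/q < 1 := by rw [div_lt_one hqR]; exact_mod_cast hj
      linarith
    have e1 : (1:ℝ) ≤ y + (j:ℝ)/q ↔ (((q:ℤ) - j : ℤ):ℝ) ≤ q*y := by
      push_cast
      constructor <;> intro h
      · nlinarith [mul_le_mul_of_nonneg_left h (le_of_lt hqR)]
      · nlinarith [mul_le_mul_of_nonneg_left h (le_of_lt hqR)]
    have e2 : (1:ℝ) ≤ y + (j:ℝ)/q ↔ q - m ≤ j := by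
      rw [e1, ← Int.le_floor]; omega
    by_cases hc : (1:ℝ) ≤ y + (j:ℝ)/q
    · rw [if_pos (e2.1 hc)]
      exact Int.floor_eq_iff.2 ⟨by exact_mod_cast hc, by push_cast; linarith⟩
    · rw [if_neg (fun h => hc (e2.2 h))]
      push_neg at hc
      exact Int.floor_eq_iff.2 ⟨by exact_mod_cast hnn, by push_cast; linarith⟩
  rw [Finset.sum_congr rfl key, Finset.sum_boole]
  have hf : (Finset.range q).filter (fun x => q - m ≤ x) = Finset.Ico (q-m) q := by
    ext x; simp only [Finset.mem_filter, Finset.mem_range, Finset.mem_Ico]; omega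
  rw [hf, Nat.card_Ico]
  omega

lemma hermite_floor (q : ℕ) (hq : 1 ≤ q) (x : ℝ) :
    ∑ j ∈ Finset.range q, ⌊x + (j : ℝ)/q⌋ = ⌊(q:ℝ) * x⌋ := by
  have h1 : ∀ j ∈ Finset.range q, ⌊x + (j:ℝ)/q⌋ = ⌊Int.fract x + (j:ℝ)/q⌋ + ⌊x⌋ := by
    intro j _
    have : x + (j:ℝ)/q = Int.fract x + (j:ℝ)/q + (⌊x⌋:ℤ) := by
      rw [Int.fract]; push_cast; ring
    rw [this, Int.floor_add_intCast]
  rw [Finset.sum_congr rfl h1, Finset.sum_add_distrib,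
    hermite_inner q hq _ (Int.fract_nonneg x) (Int.fract_lt_one x), Finset.sum_const,
    Finset.card_range]
  have h2 : (q:ℝ) * x = (q:ℝ) * Int.fract x + ((q * ⌊x⌋ : ℤ) : ℝ) := by
    rw [Int.fract]; push_cast; ring
  rw [h2, Int.floor_add_intCast]
  push_cast; ring

lemma sum_range_id_real (q : ℕ) : ∑ j ∈ Finset.range q, (j:ℝ) = q * (q-1)/2 := by
  induction q with
  | zero => simp
  | succ n ih => rw [Finset.sum_range_succ, ih]; push_cast; ring

lemma hermite_sawtooth (q : ℕ) (hq : 1 ≤ q) (x : ℝ) :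
    ∑ j ∈ Finset.range q, sawtooth (x + (j : ℝ)/q) = sawtooth ((q:ℝ) * x) := by
  have hqR : (0:ℝ) < q := by positivity
  have hA : ∑ j ∈ Finset.range q, ((⌊x + (j:ℝ)/q⌋ : ℝ)) = ((⌊(q:ℝ)*x⌋ : ℤ) : ℝ) := by
    rw [← Int.cast_sum, hermite_floor q hq x]
  have hs : ∑ j ∈ Finset.range q, ((j:ℝ)/q) = (q-1)/2 := by
    rw [← Finset.sum_div, sum_range_id_real]; field_simp
  simp only [sawtooth]
  rw [Finset.sum_add_distrib, Finset.sum_sub_distrib, hA, Finset.sum_add_distrib, hs,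
    Finset.sum_const, Finset.sum_const, Finset.card_range]
  push_cast
  ring

lemma mod_inj (q : ℕ) (p c : ℤ) (hcop : Int.gcd p q = 1) :
    ∀ i₁ i₂ : ℕ, i₁ < q → i₂ < q → (p*i₁ + c) % q = (p*i₂ + c) % q → i₁ = i₂ := by
  intro i₁ i₂ h1 h2 h
  have hm : (p*i₁ + c) ≡ (p*i₂ + c) [ZMOD q] := h
  have hd : (q:ℤ) ∣ (p*i₂ + c) - (p*i₁ + c) := Int.ModEq.dvd hm
  have hd2 : (q:ℤ) ∣ p * ((i₂:ℤ) - i₁) := by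
    have : (p*i₂ + c) - (p*i₁ + c) = p * ((i₂:ℤ) - i₁) := by ring
    rwa [this] at hd
  have hcop' : IsCoprime (q:ℤ) p := by
    rw [Int.isCoprime_iff_gcd_eq_one, Int.gcd_comm]; exact hcop
  have hd3 : (q:ℤ) ∣ ((i₂:ℤ) - i₁) := hcop'.dvd_of_dvd_mul_left hd2
  have := Int.eq_zero_of_abs_lt_dvd hd3 (by rw [abs_lt]; constructor <;> push_cast <;> omega)
  omega

lemma sum_mod_bij (q : ℕ) (hq : 1 ≤ q) (p c : ℤ) (hcop : Int.gcd p q = 1) (f : ℕ → ℝ) :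
    ∑ i ∈ Finset.range q, f (((p*i + c) % q).toNat) = ∑ j ∈ Finset.range q, f j := by
  have hq0 : (0:ℤ) < q := by exact_mod_cast hq
  set φ : ℕ → ℕ := fun i => ((p*i + c) % q).toNat with hφ
  have hmem : ∀ i ∈ Finset.range q, φ i ∈ Finset.range q := by
    intro i _
    simp only [hφ, Finset.mem_range]
    have h1 : (p*i + c) % q < q := Int.emod_lt_of_pos _ hq0
    omega
  have hinj : Set.InjOn φ (Finset.range q) := by
    intro i₁ hi₁ i₂ hi₂ he
    simp only [Finset.coe_range, Set.mem_Iio] at hi₁ hi₂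
    apply mod_inj q p c hcop i₁ i₂ hi₁ hi₂
    have n1 : 0 ≤ (p*i₁ + c) % q := Int.emod_nonneg _ (by omega)
    have n2 : 0 ≤ (p*i₂ + c) % q := Int.emod_nonneg _ (by omega)
    simp only [hφ] at he
    omega
  have himg : (Finset.range q).image φ = Finset.range q := by
    apply Finset.eq_of_subset_of_card_le
    · intro j hj
      obtain ⟨i, hi, rfl⟩ := Finset.mem_image.1 hj
      exact hmem i hi
    · rw [Finset.card_image_of_injOn hinj]
  conv_rhs => rw [← himg]
  rw [Finset.sum_image (fun x hx y hy h => hinj hx hy h)]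

lemma rational_block (q : ℕ) (hq : 1 ≤ q) (p : ℤ) (hcop : Int.gcd p q = 1) (γ : ℝ) :
    ∑ i ∈ Finset.range q, sawtooth (((p*i:ℤ):ℝ)/(q:ℝ) + γ) = sawtooth ((q:ℝ)*γ) := by
  have hq0 : (0:ℤ) < q := by exact_mod_cast hq
  have hqR : (0:ℝ) < q := by positivity
  have key : ∀ i ∈ Finset.range q,
      sawtooth (((p*i:ℤ):ℝ)/(q:ℝ) + γ) = sawtooth (γ + ((((p*i + 0) % q).toNat : ℕ):ℝ)/q) := by
    intro i _
    have hnn : 0 ≤ (p*i + 0) % q := Int.emod_nonneg _ (by omega)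
    have hsplit : ((p*i:ℤ):ℝ)/(q:ℝ) + γ
        = (γ + ((((p*i + 0) % q).toNat : ℕ):ℝ)/q) + ((p*i/q : ℤ):ℝ) := by
      have hed : ((p*i % q : ℤ):ℝ) + (q:ℝ) * ((p*i / q : ℤ):ℝ) = (p:ℝ)*(i:ℝ) := by
        exact_mod_cast congrArg (Int.cast : ℤ → ℝ) (Int.emod_add_mul_ediv (p*i) q)
      have ht : ((((p*i + 0) % q).toNat : ℕ):ℝ) = ((p*i % q : ℤ):ℝ) := by
        rw [add_zero]; exact_mod_cast Int.toNat_of_nonneg (by rwa [add_zero] at hnn)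
      rw [ht]
      field_simp
      push_cast at hed ⊢
      linarith [hed]
    rw [hsplit, sawtooth_add_int]
  rw [Finset.sum_congr rfl key,
    sum_mod_bij q hq p 0 hcop (fun j => sawtooth (γ + (j:ℝ)/q)),
    hermite_sawtooth q hq γ]

lemma cancel_lemma (q : ℕ) (p : ℤ) (hcop : Int.gcd p q = 1) (i₁ i₂ : ℕ) (h1 : i₁ < q)
    (h2 : i₂ < q) (hd2 : (q:ℤ) ∣ p * ((i₂:ℤ) - i₁)) : i₁ = i₂ := by
  have hcop' : IsCoprime (q:ℤ) p := by
    rw [Int.isCoprime_iff_gcd_eq_one, Int.gcd_comm]; exact hcop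
  have hd3 : (q:ℤ) ∣ ((i₂:ℤ) - i₁) := hcop'.dvd_of_dvd_mul_left hd2
  have := Int.eq_zero_of_abs_lt_dvd hd3 (by rw [abs_lt]; constructor <;> push_cast <;> omega)
  omega

lemma block_bound (α : ℝ) (q : ℕ) (hq : 1 ≤ q) (p : ℤ) (hcop : Int.gcd p q = 1)
    (happ : |(q:ℝ)*α - p| ≤ 1/q) (γ : ℝ) :
    |∑ i ∈ Finset.range q, sawtooth (α*i + γ)| ≤ 4 := by
  have hqR : (0:ℝ) < q := by positivity
  set y : ℕ → ℝ := fun i => ((p*i:ℤ):ℝ)/q + γ with hy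
  set e : ℕ → ℝ := fun i => α*i + γ - y i with he
  set d : ℕ → ℤ := fun i => ⌊α*(i:ℝ) + γ⌋ - ⌊y i⌋ with hd
  -- bound on e
  have he_abs : ∀ i ∈ Finset.range q, |e i| ≤ 1/q := by
    intro i hi
    rw [Finset.mem_range] at hi
    have hei : e i = (i:ℝ) * ((q:ℝ)*α - p)/q := by
      simp only [he, hy]; push_cast; field_simp; ring
    rw [hei, abs_div, abs_mul, abs_of_pos hqR, abs_of_nonneg (by positivity : (0:ℝ) ≤ (i:ℝ))]
    rw [div_le_div_iff₀ hqR hqR]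
    have hiq : (i:ℝ) ≤ q := by exact_mod_cast le_of_lt hi
    have h2 : |(q:ℝ)*α - p| * q ≤ 1 := by
      have := mul_le_mul_of_nonneg_right happ (le_of_lt hqR)
      rwa [div_mul_cancel₀ _ (ne_of_gt hqR)] at this
    nlinarith [abs_nonneg ((q:ℝ)*α - p)]
  -- decomposition
  have hsplit : ∀ i ∈ Finset.range q,
      sawtooth (α*i + γ) = sawtooth (y i) + ((d i : ℤ):ℝ) - e i := by
    intro i _
    simp only [sawtooth, hd, he]
    push_cast
    ring
  rw [Finset.sum_congr rfl hsplit, Finset.sum_sub_distrib, Finset.sum_add_distrib]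
  have hrat : ∑ i ∈ Finset.range q, sawtooth (y i) = sawtooth ((q:ℝ)*γ) :=
    rational_block q hq p hcop γ
  rw [hrat]
  -- bound the e-sum
  have hE : |∑ i ∈ Finset.range q, e i| ≤ 1 := by
    calc |∑ i ∈ Finset.range q, e i| ≤ ∑ i ∈ Finset.range q, |e i| :=
          Finset.abs_sum_le_sum_abs _ _
      _ ≤ ∑ i ∈ Finset.range q, 1/(q:ℝ) := Finset.sum_le_sum he_abs
      _ = q * (1/q) := by rw [Finset.sum_const, Finset.card_range, nsmul_eq_mul]
      _ = 1 := by field_simp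
  -- bound the d-sum
  have hd_abs : ∀ i ∈ Finset.range q, |d i| ≤ 1 := by
    intro i hi
    have hei := he_abs i hi
    have h1q : 1/(q:ℝ) ≤ 1 := by
      rw [div_le_one hqR]; exact_mod_cast hq
    have hx1 : α*(i:ℝ) + γ ≤ y i + 1 := by
      have : α*(i:ℝ) + γ - y i ≤ 1 := le_trans (le_abs_self _) (le_trans hei h1q)
      linarith
    have hx2 : y i - 1 ≤ α*(i:ℝ) + γ := by
      have : -(1:ℝ) ≤ α*(i:ℝ) + γ - y i := by
        have := neg_abs_le (e i)
        simp only [he] at *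
        linarith [le_trans hei h1q]
      linarith
    have f1 : ⌊α*(i:ℝ) + γ⌋ ≤ ⌊y i⌋ + 1 := by
      have := Int.floor_mono hx1
      rwa [show y i + 1 = y i + (1:ℤ) by push_cast; ring, Int.floor_add_intCast] at this
    have f2 : ⌊y i⌋ - 1 ≤ ⌊α*(i:ℝ) + γ⌋ := by
      have := Int.floor_mono hx2
      rwa [show y i - 1 = y i + (-1:ℤ) by push_cast; ring, Int.floor_add_intCast] at this
    simp only [hd]
    rw [abs_le]
    omega
  set ψ : ℕ → ℤ := fun i => ⌊(q:ℝ) * Int.fract (y i)⌋ with hψ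
  have hψ_eq : ∀ i : ℕ, ψ i = ⌊(q:ℝ)*γ⌋ + (p*i - q*⌊y i⌋) := by
    intro i
    have harg : (q:ℝ) * Int.fract (y i) = (q:ℝ)*γ + ((p*i - q*⌊y i⌋ : ℤ):ℝ) := by
      rw [Int.fract]
      simp only [hy]
      push_cast
      field_simp
      ring
    rw [hψ]
    simp only
    rw [harg, Int.floor_add_intCast]
  have hψ_inj : ∀ i₁ ∈ Finset.range q, ∀ i₂ ∈ Finset.range q, ψ i₁ = ψ i₂ → i₁ = i₂ := by
    intro i₁ hi₁ i₂ hi₂ hψe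
    rw [Finset.mem_range] at hi₁ hi₂
    rw [hψ_eq, hψ_eq] at hψe
    apply cancel_lemma q p hcop i₁ i₂ hi₁ hi₂
    have : p * ((i₂:ℤ) - i₁) = q*⌊y i₂⌋ - q*⌊y i₁⌋ := by linarith
    rw [this]
    exact dvd_sub (Dvd.intro _ rfl) (Dvd.intro _ rfl)
  have hψ_bad : ∀ i ∈ Finset.range q, d i ≠ 0 → ψ i = 0 ∨ ψ i = (q:ℤ) - 1 := by
    intro i hi hdi
    have hei := he_abs i hi
    have hf0 : 0 ≤ Int.fract (y i) := Int.fract_nonneg _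
    have hf1 : Int.fract (y i) < 1 := Int.fract_lt_one _
    rcases lt_or_gt_of_ne hdi with hneg | hpos
    · -- d i < 0 : x < ⌊y⌋, fract y < 1/q, ψ = 0
      left
      have hfl : ⌊α*(i:ℝ) + γ⌋ ≤ ⌊y i⌋ - 1 := by simp only [hd] at hneg; omega
      have hxlt : α*(i:ℝ) + γ < (⌊y i⌋ : ℝ) := by
        have h1 := Int.lt_floor_add_one (α*(i:ℝ) + γ)
        have h2 : ((⌊α*(i:ℝ) + γ⌋ : ℤ):ℝ) ≤ ((⌊y i⌋ - 1 : ℤ):ℝ) := by exact_mod_cast hfl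
        push_cast at h2
        linarith
      have hfr : Int.fract (y i) < 1/q := by
        rw [Int.fract]
        have hee : e i = α*(i:ℝ) + γ - y i := rfl
        have h4 : -(1/(q:ℝ)) ≤ e i := neg_le_of_abs_le hei
        clear_value y e d ψ
        linarith
      rw [hψ]
      simp only
      apply Int.floor_eq_iff.2
      constructor
      · push_cast; positivity
      · push_cast
        have h5 : (q:ℝ) * Int.fract (y i) < q * (1/q) := mul_lt_mul_of_pos_left hfr hqR
        have h6 : (q:ℝ) * (1/q) = 1 := by field_simp
        linarith
    · -- d i > 0 : fract y > 1 - 1/q, ψ = q-1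
      right
      have hfl : ⌊y i⌋ + 1 ≤ ⌊α*(i:ℝ) + γ⌋ := by simp only [hd] at hpos; omega
      have hxge : ((⌊y i⌋:ℝ)) + 1 ≤ α*(i:ℝ) + γ := by
        have h2 : ((⌊y i⌋ + 1 : ℤ):ℝ) ≤ ((⌊α*(i:ℝ) + γ⌋ : ℤ):ℝ) := by exact_mod_cast hfl
        push_cast at h2
        linarith [Int.floor_le (α*(i:ℝ) + γ)]
      have hfr : 1 - 1/(q:ℝ) ≤ Int.fract (y i) := by
        rw [Int.fract]
        have hee : e i = α*(i:ℝ) + γ - y i := rfl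
        have h3 : e i ≤ 1/q := le_trans (le_abs_self _) hei
        clear_value y e d ψ
        linarith
      rw [hψ]
      simp only
      apply Int.floor_eq_iff.2
      constructor
      · push_cast
        have : (q:ℝ) * (1 - 1/q) ≤ q * Int.fract (y i) := by
          apply mul_le_mul_of_nonneg_left hfr (le_of_lt hqR)
        have hq1 : (q:ℝ) * (1 - 1/q) = q - 1 := by field_simp
        linarith
      · push_cast
        nlinarith
  -- the bad set
  classical
  set B := (Finset.range q).filter (fun i => d i ≠ 0) with hB
  have hcardB : B.card ≤ 2 := by
    have h2 : B.card ≤ ({0, (q:ℤ)-1} : Finset ℤ).card := by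
      apply Finset.card_le_card_of_injOn ψ
      · intro i hi
        simp only [Finset.mem_coe, hB, Finset.mem_filter] at hi
        rcases hψ_bad i hi.1 hi.2 with h | h <;> simp [h]
      · intro i₁ hi₁ i₂ hi₂ hψe
        rw [Finset.mem_coe, hB, Finset.mem_filter] at hi₁ hi₂
        exact hψ_inj i₁ hi₁.1 i₂ hi₂.1 hψe
    calc B.card ≤ ({0, (q:ℤ)-1} : Finset ℤ).card := h2
      _ ≤ 2 := Finset.card_insert_le _ _ |>.trans (by simp)
  have hD : |∑ i ∈ Finset.range q, ((d i : ℤ):ℝ)| ≤ 2 := by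
    have hsum : ∑ i ∈ Finset.range q, ((d i : ℤ):ℝ) = ∑ i ∈ B, ((d i : ℤ):ℝ) := by
      rw [hB]
      rw [Finset.sum_filter_of_ne]
      intro i _ hne
      intro hdz
      exact hne (by rw [hdz]; simp)
    rw [hsum]
    calc |∑ i ∈ B, ((d i : ℤ):ℝ)| ≤ ∑ i ∈ B, |((d i : ℤ):ℝ)| := Finset.abs_sum_le_sum_abs _ _
      _ ≤ ∑ i ∈ B, 1 := by
          apply Finset.sum_le_sum
          intro i hi
          rw [hB, Finset.mem_filter] at hi
          have := hd_abs i hi.1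
          calc |((d i : ℤ):ℝ)| = ((|d i| : ℤ):ℝ) := by rw [Int.cast_abs]
            _ ≤ ((1:ℤ):ℝ) := by exact_mod_cast this
            _ = 1 := by norm_num
      _ = B.card := by rw [Finset.sum_const, nsmul_eq_mul, mul_one]
      _ ≤ 2 := by exact_mod_cast hcardB
  have hsaw := abs_sawtooth_le ((q:ℝ)*γ)
  calc |sawtooth ((q:ℝ)*γ) + ∑ i ∈ Finset.range q, ((d i : ℤ):ℝ) - ∑ i ∈ Finset.range q, e i|
      ≤ |sawtooth ((q:ℝ)*γ)| + |∑ i ∈ Finset.range q, ((d i : ℤ):ℝ)| + |∑ i ∈ Finset.range q, e i| := by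
        apply le_trans (abs_sub _ _)
        gcongr
        exact abs_add_le _ _
    _ ≤ 1/2 + 2 + 1 := by gcongr
    _ ≤ 4 := by norm_num

lemma multi_block (α : ℝ) (q : ℕ) (hq : 1 ≤ q) (p : ℤ) (hcop : Int.gcd p q = 1)
    (happ : |(q:ℝ)*α - p| ≤ 1/q) :
    ∀ b r : ℕ, ∀ β : ℝ, |∑ k ∈ Finset.Icc 1 (r + b*q), sawtooth (α*k + β)|
      ≤ |∑ k ∈ Finset.Icc 1 r, sawtooth (α*k + β)| + 4*b := by
  intro b
  induction b with
  | zero => intro r β; simp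
  | succ n ih =>
    intro r β
    have hIoc : ∀ m : ℕ, Finset.Icc 1 m = Finset.Ioc 0 m := by
      intro m; ext x; simp [Finset.mem_Icc, Finset.mem_Ioc]; omega
    have hsplit : ∑ k ∈ Finset.Icc 1 (r + (n+1)*q), sawtooth (α*k + β)
        = ∑ k ∈ Finset.Icc 1 (r + n*q), sawtooth (α*k + β)
          + ∑ k ∈ Finset.Ioc (r + n*q) (r + n*q + q), sawtooth (α*k + β) := by
      have hre2 : r + (n+1)*q = (r + n*q) + q := by ring
      rw [hre2, hIoc, hIoc,
        ← Finset.sum_Ioc_consecutive _ (Nat.zero_le (r + n*q)) (by omega : r + n*q ≤ r + n*q + q)]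
    have hblock : |∑ k ∈ Finset.Ioc (r + n*q) (r + n*q + q), sawtooth (α*k + β)| ≤ 4 := by
      set M := r + n*q with hM
      have hre : ∑ k ∈ Finset.Ioc M (M + q), sawtooth (α*k + β)
          = ∑ i ∈ Finset.range q, sawtooth (α*i + (β + α*(M+1))) := by
        apply Finset.sum_nbij' (fun k => k - (M+1)) (fun i => M+1+i)
        · intro k hk; rw [Finset.mem_Ioc] at hk; rw [Finset.mem_range]; omega
        · intro i hi; rw [Finset.mem_range] at hi; rw [Finset.mem_Ioc]; omega
        · intro k hk; rw [Finset.mem_Ioc] at hk; omega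
        · intro i hi; rw [Finset.mem_range] at hi; omega
        · intro k hk
          rw [Finset.mem_Ioc] at hk
          congr 1
          have : ((k - (M+1) : ℕ):ℝ) = (k:ℝ) - (M+1) := by
            push_cast [Nat.cast_sub (by omega : M+1 ≤ k)]
            ring
          rw [this]
          push_cast
          ring
      rw [hre]
      exact block_bound α q hq p hcop happ _
    calc |∑ k ∈ Finset.Icc 1 (r + (n+1)*q), sawtooth (α*k + β)|
        ≤ |∑ k ∈ Finset.Icc 1 (r + n*q), sawtooth (α*k + β)|
          + |∑ k ∈ Finset.Ioc (r + n*q) (r + n*q + q), sawtooth (α*k + β)| := by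
          rw [hsplit]; exact abs_add_le _ _
      _ ≤ (|∑ k ∈ Finset.Icc 1 r, sawtooth (α*k + β)| + 4*n) + 4 := by
          gcongr
          · exact ih r β
      _ ≤ |∑ k ∈ Finset.Icc 1 r, sawtooth (α*k + β)| + 4*((n+1:ℕ):ℝ) := by push_cast; linarith

lemma key_induction (α τ δ : ℝ) (hτ : 0 < τ) (hδ : 0 < δ) (htyp : IsTypicalWith α τ δ) :
    ∀ N : ℕ, ∀ β : ℝ, |∑ k ∈ Finset.Icc 1 N, sawtooth (α*k + β)|
      ≤ (4/δ + 4) * (1 + Real.log (1+N) / Real.log 2) * (Real.log (1+N))^τ := by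
  set K := 4/δ + 4 with hK
  have hK0 : 0 < K := by rw [hK]; positivity
  set L := Real.log 2 with hL
  have hL0 : 0 < L := Real.log_pos (by norm_num)
  intro N
  induction N using Nat.strong_induction_on with
  | _ N ih =>
    rcases Nat.eq_zero_or_pos N with rfl | hN
    · intro β
      simp only [Nat.cast_zero, add_zero, Real.log_one, zero_div, add_zero]
      rw [Finset.Icc_eq_empty (by omega)]
      simp [Real.zero_rpow (ne_of_gt hτ)]
    intro β
    -- Dirichlet
    obtain ⟨j, k, hk0, hkN, happ⟩ := Real.exists_int_int_abs_mul_sub_le α hN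
    set g : ℕ := Int.gcd j k with hg
    have hg0 : 0 < g := Int.gcd_pos_iff.2 (Or.inr (ne_of_gt hk0))
    have hgj : (g:ℤ) ∣ j := Int.gcd_dvd_left j k
    have hgk : (g:ℤ) ∣ k := Int.gcd_dvd_right j k
    set p : ℤ := j / g with hp
    set qZ : ℤ := k / g with hqZdef
    have hkeq : (g:ℤ) * qZ = k := Int.mul_ediv_cancel' hgk
    have hjeq : (g:ℤ) * p = j := Int.mul_ediv_cancel' hgj
    have hqZ0 : 0 < qZ := by
      rcases le_or_gt qZ 0 with h | h
      · exfalso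
        have : (g:ℤ) * qZ ≤ 0 := mul_nonpos_of_nonneg_of_nonpos (by positivity) h
        omega
      · exact h
    have hcop : Int.gcd p qZ = 1 := Int.gcd_div_gcd_div_gcd (by exact_mod_cast hg0)
    set q : ℕ := qZ.toNat with hq
    have hqZ : (q:ℤ) = qZ := Int.toNat_of_nonneg (le_of_lt hqZ0)
    have hq1 : 1 ≤ q := by omega
    have hqN : q ≤ N := by
      have h1 : qZ ≤ k := by nlinarith [hqZ0]
      have h2 : (q:ℤ) ≤ N := by omega
      exact_mod_cast h2
    have hqR : (0:ℝ) < q := by positivity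
    -- approximation for q
    have happ' : |(q:ℝ)*α - p| ≤ 1/((N:ℝ)+1) := by
      have hcast : (k:ℝ)*α - j = (g:ℝ)*((q:ℝ)*α - p) := by
        have h1 : (k:ℝ) = g * q := by
          rw [← hkeq] at *
          push_cast [← hqZ]
          push_cast [hqZ]
          ring
        have h2 : (j:ℝ) = g * p := by rw [← hjeq]; push_cast; ring
        rw [h1, h2]; ring
      have h3 : |(k:ℝ)*α - j| = g * |(q:ℝ)*α - p| := by
        rw [hcast, abs_mul, abs_of_nonneg (by positivity : (0:ℝ) ≤ (g:ℝ))]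
      have h4 : |(q:ℝ)*α - p| ≤ g * |(q:ℝ)*α - p| := by
        nlinarith [abs_nonneg ((q:ℝ)*α - p), (by exact_mod_cast hg0 : (1:ℝ) ≤ g)]
      have h5 : |(k:ℝ)*α - j| ≤ 1/((N:ℝ)+1) := by
        have := happ
        push_cast at this ⊢
        convert this using 2
      linarith [h3 ▸ h4]
    have happq : |(q:ℝ)*α - p| ≤ 1/(q:ℝ) := by
      apply le_trans happ'
      rw [div_le_div_iff₀ (by positivity) hqR]
      have : (q:ℝ) ≤ N := by exact_mod_cast hqN
      linarith
    -- typicality bound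
    have hlogq : 0 < Real.log (1 + q) := Real.log_pos (by push_cast; linarith)
    have hlogN : 0 ≤ Real.log (1 + (N:ℝ)) := Real.log_nonneg (by push_cast; linarith)
    have htypb : δ * ((N:ℝ)+1) ≤ q * (Real.log (1 + q))^τ := by
      have h6 := htyp (-p) (q:ℤ) (by omega)
      have h7 : |((-p : ℤ):ℝ) + α * ((q:ℤ):ℝ)| = |(q:ℝ)*α - p| := by
        push_cast
        rw [show -(p:ℝ) + α * q = (q:ℝ)*α - p by ring]
      have h8 : |(((q:ℤ)):ℝ)| = (q:ℝ) := by
        push_cast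
        exact abs_of_pos hqR
      rw [h7, h8] at h6
      have h9 : δ / ((q:ℝ) * Real.log (1 + q) ^ τ) ≤ 1/((N:ℝ)+1) := le_trans h6 happ'
      have h10 : (0:ℝ) < (q:ℝ) * Real.log (1 + q) ^ τ := by positivity
      rw [div_le_div_iff₀ h10 (by positivity)] at h9
      linarith
    -- decomposition
    set b : ℕ := N / q with hb
    set r : ℕ := N % q with hr
    have hNrb : N = r + b * q := by rw [hr, hb]; exact (Nat.mod_add_div' N q).symm
    have hb1 : 1 ≤ b := by rw [hb]; exact Nat.one_le_div_iff (by omega) |>.2 hqN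
    have hrq : r < q := Nat.mod_lt _ (by omega)
    have hrN : 2 * r ≤ N - 1 := by
      have : r + q ≤ N := by
        calc r + q ≤ r + b * q := by nlinarith
          _ = N := hNrb.symm
      omega
    have hrltN : r < N := by omega
    -- bound on b
    have hbb : (b:ℝ) ≤ (Real.log (1 + (N:ℝ)))^τ / δ := by
      have h11 : (b:ℝ) ≤ (N:ℝ)/q := by
        rw [hb]
        exact Nat.cast_div_le
      have h12 : (Real.log (1+(q:ℝ)))^τ ≤ (Real.log (1+(N:ℝ)))^τ := by
        apply Real.rpow_le_rpow (le_of_lt hlogq)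
        · apply Real.log_le_log (by positivity)
          have : (q:ℝ) ≤ N := by exact_mod_cast hqN
          linarith
        · exact le_of_lt hτ
      have h13 : (N:ℝ)/q ≤ (Real.log (1+(q:ℝ)))^τ / δ := by
        rw [div_le_div_iff₀ hqR hδ]
        nlinarith
      calc (b:ℝ) ≤ (N:ℝ)/q := h11
        _ ≤ (Real.log (1+(q:ℝ)))^τ / δ := h13
        _ ≤ (Real.log (1+(N:ℝ)))^τ / δ := by gcongr
    -- apply multi_block and IH
    have hmb := multi_block α q hq1 p (by rwa [← hqZ] at hcop) happq b r β
    rw [← hNrb] at hmb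
    have hih := ih r hrltN β
    -- log comparison
    have hlogr : Real.log (1 + (r:ℝ)) ≤ Real.log (1 + (N:ℝ)) - L := by
      have h14 : 2 * (1 + (r:ℝ)) ≤ 1 + (N:ℝ) := by
        have : (2*r:ℕ) ≤ N - 1 := hrN
        have h15 : (2*r : ℝ) ≤ (N:ℝ) - 1 := by
          have h16 : ((2*r:ℕ):ℝ) ≤ ((N-1:ℕ):ℝ) := by exact_mod_cast hrN
          push_cast [Nat.cast_sub (by omega : 1 ≤ N)] at h16
          linarith
        linarith
      calc Real.log (1 + (r:ℝ)) = Real.log (2*(1+(r:ℝ))) - L := by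
            rw [Real.log_mul (by norm_num) (by positivity), hL]; ring
        _ ≤ Real.log (1 + (N:ℝ)) - L := by
            have := Real.log_le_log (by positivity : (0:ℝ) < 2*(1+(r:ℝ))) h14
            linarith
    have hlogr0 : 0 ≤ Real.log (1 + (r:ℝ)) := Real.log_nonneg (by push_cast; linarith)
    have hAr : (Real.log (1+(r:ℝ)))^τ ≤ (Real.log (1+(N:ℝ)))^τ := by
      apply Real.rpow_le_rpow hlogr0 (by linarith) (le_of_lt hτ)
    have hAr0 : 0 ≤ (Real.log (1+(r:ℝ)))^τ := Real.rpow_nonneg hlogr0 _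
    have hAN0 : 0 ≤ (Real.log (1+(N:ℝ)))^τ := Real.rpow_nonneg hlogN _
    -- final assembly
    set LN := Real.log (1 + (N:ℝ)) with hLN
    set Lr := Real.log (1 + (r:ℝ)) with hLr
    have step1 : K * (1 + Lr/L) * Lr^τ ≤ K * (LN/L) * LN^τ := by
      have h1 : 1 + Lr/L ≤ LN/L := by
        have h2 : (L + Lr)/L ≤ LN/L := by gcongr; linarith
        rw [add_div, div_self (ne_of_gt hL0)] at h2
        linarith
      exact mul_le_mul (mul_le_mul_of_nonneg_left h1 (le_of_lt hK0)) hAr hAr0 (by positivity)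
    have step2 : 4 * (b:ℝ) ≤ K * LN^τ := by
      calc 4 * (b:ℝ) ≤ 4 * (LN^τ / δ) := by gcongr
        _ = (4/δ) * LN^τ := by ring
        _ ≤ K * LN^τ := by
            apply mul_le_mul_of_nonneg_right _ hAN0
            rw [hK]; linarith
    clear_value K L LN Lr
    calc |∑ k ∈ Finset.Icc 1 N, sawtooth (α*k + β)|
        ≤ |∑ k ∈ Finset.Icc 1 r, sawtooth (α*k + β)| + 4*b := hmb
      _ ≤ K * (1 + Lr/L) * Lr^τ + 4*b := by gcongr
      _ ≤ K * (LN/L) * LN^τ + K * LN^τ := by linarith [step1, step2]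
      _ = K * (1 + LN/L) * LN^τ := by ring



/-- **Discrepancy bound for the sawtooth sums of a typical number.** If `α` is typical
with exponent `τ > 0`, then there is `C_α > 0` such that for every integer `N ≥ 2`
and every `β ∈ ℝ`, `|∑_{k=1}^N σ(αk + β)| ≤ C_α (log N)^{1+τ}`. -/
theorem sawtooth_sum_bound (α τ : ℝ) (hτ : 0 < τ)
    (ht : ∃ δ > (0:ℝ), IsTypicalWith α τ δ) :
    ∃ C > (0:ℝ), ∀ N : ℕ, 2 ≤ N → ∀ β : ℝ,
      |∑ k ∈ Finset.Icc 1 N, sawtooth (α * (k : ℝ) + β)| ≤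
        C * (Real.log (N : ℝ)) ^ (1 + τ) := by
  obtain ⟨δ, hδ, htyp⟩ := ht
  have hL0 : (0:ℝ) < Real.log 2 := Real.log_pos (by norm_num)
  refine ⟨(2*(4/δ + 4)/Real.log 2) * (2:ℝ)^(1+τ), by positivity, ?_⟩
  intro N hN β
  have h := key_induction α τ δ hτ hδ htyp N β
  set K := 4/δ + 4 with hK
  have hK0 : 0 < K := by rw [hK]; positivity
  set L := Real.log 2 with hL
  set LN := Real.log (1+(N:ℝ)) with hLN
  set LgN := Real.log (N:ℝ) with hLgN
  have hN2 : (2:ℝ) ≤ (N:ℝ) := by exact_mod_cast hN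
  have hLN2 : L ≤ LN := Real.log_le_log (by norm_num) (by linarith)
  have hLN0 : 0 < LN := lt_of_lt_of_le hL0 hLN2
  have hLgN0 : 0 < LgN := Real.log_pos (by linarith)
  have hstep1 : K * (1 + LN/L) * LN^τ ≤ (2*K/L) * LN^(1+τ) := by
    have h1 : 1 + LN/L ≤ 2*LN/L := by
      have h2 : 1 ≤ LN/L := (one_le_div hL0).2 hLN2
      have h3 : LN/L + LN/L = 2*LN/L := by ring
      linarith
    have h4 : LN^(1+τ) = LN * LN^τ := by
      rw [Real.rpow_add hLN0, Real.rpow_one]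
    rw [h4]
    have h5 : 0 ≤ LN^τ := Real.rpow_nonneg (le_of_lt hLN0) _
    have h6 : K * (1 + LN/L) * LN^τ ≤ K * (2*LN/L) * LN^τ := by
      apply mul_le_mul_of_nonneg_right (mul_le_mul_of_nonneg_left h1 (le_of_lt hK0)) h5
    calc K * (1 + LN/L) * LN^τ ≤ K * (2*LN/L) * LN^τ := h6
      _ = (2*K/L) * (LN * LN^τ) := by ring
  have hstep2 : LN ≤ 2 * LgN := by
    have h7 : (1:ℝ) + N ≤ (N:ℝ)^2 := by nlinarith
    calc LN ≤ Real.log ((N:ℝ)^2) := Real.log_le_log (by positivity) h7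
      _ = 2 * LgN := by rw [Real.log_pow]; push_cast; ring
  have hstep3 : LN^(1+τ) ≤ (2:ℝ)^(1+τ) * LgN^(1+τ) := by
    calc LN^(1+τ) ≤ (2*LgN)^(1+τ) :=
          Real.rpow_le_rpow (le_of_lt hLN0) hstep2 (by linarith)
      _ = (2:ℝ)^(1+τ) * LgN^(1+τ) := Real.mul_rpow (by norm_num) (le_of_lt hLgN0)
  calc |∑ k ∈ Finset.Icc 1 N, sawtooth (α * (k:ℝ) + β)|
      ≤ K * (1 + LN/L) * LN^τ := h
    _ ≤ (2*K/L) * LN^(1+τ) := hstep1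
    _ ≤ (2*K/L) * ((2:ℝ)^(1+τ) * LgN^(1+τ)) := by
        apply mul_le_mul_of_nonneg_left hstep3 (by positivity)
    _ = (2*K/L) * (2:ℝ)^(1+τ) * LgN^(1+τ) := by ring
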